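/- arXiv:1905.01864 — 3 statements merged into one kernel-verified Lean document; each statement's English description precedes it below -/
import Mathlib

section
/- Let $n \ge 1$, $\delta \ge 0$, and $0 < \gamma < 1$. Then $\lim_{\varepsilon \to 0^+} \frac{1}{(-\ln\varepsilon)^{\delta+1}} \int_0^{\varepsilon^{\gamma-1}} \frac{r^{2n-1}}{(1+r^2)^n}\left(\ln(1+r^2)\right)^\delta\,dr = \frac{(2(1-\gamma))^{\delta+1}}{2(1+\delta)}$. -/
open MeasureTheory intervalIntegral Set Filter



section aux
variable {δ : ℝ}

lemma cont_phi (hδ : 0 ≤ δ) : Continuous fun x : ℝ => x ^ δ :=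
  continuous_iff_continuousAt.2 fun x => Real.continuousAt_rpow_const x δ (Or.inr hδ)

lemma one_add_sq_pos (r : ℝ) : (0:ℝ) < 1 + r ^ 2 := by positivity

lemma log_one_add_sq_nonneg (r : ℝ) : 0 ≤ Real.log (1 + r ^ 2) :=
  Real.log_nonneg (by nlinarith [sq_nonneg r])

/-- derivative of the inner log term -/
lemma hasDeriv_log (r : ℝ) :
    HasDerivAt (fun r : ℝ => Real.log (1 + r ^ 2)) (2 * r / (1 + r ^ 2)) r := by
  have h1 : HasDerivAt (fun r : ℝ => 1 + r ^ 2) (2 * r) r := by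
    simpa using ((hasDerivAt_pow 2 r).const_add 1)
  simpa using h1.log (one_add_sq_pos r).ne'

/-- antiderivative of g -/
lemma hasDeriv_G (hδ : 0 ≤ δ) (r : ℝ) :
    HasDerivAt (fun r : ℝ => Real.log (1 + r ^ 2) ^ (δ + 1) / (2 * (δ + 1)))
      (r / (1 + r ^ 2) * Real.log (1 + r ^ 2) ^ δ) r := by
  have houter : HasDerivAt (fun x : ℝ => x ^ (δ + 1))
      ((δ + 1) * Real.log (1 + r ^ 2) ^ δ) (Real.log (1 + r ^ 2)) := by
    have := Real.hasDerivAt_rpow_const (x := Real.log (1 + r ^ 2)) (p := δ + 1)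
      (Or.inr (by linarith))
    simpa using this
  have := (houter.comp r (hasDeriv_log r)).div_const (2 * (δ + 1))
  refine this.congr_deriv ?_
  have hδ1 : δ + 1 ≠ 0 := by linarith
  field_simp

lemma integral_g (hδ : 0 ≤ δ) (T : ℝ) :
    (∫ r in (0:ℝ)..T, r / (1 + r ^ 2) * Real.log (1 + r ^ 2) ^ δ)
      = Real.log (1 + T ^ 2) ^ (δ + 1) / (2 * (δ + 1)) := by
  have hcont : Continuous fun r : ℝ => r / (1 + r ^ 2) * Real.log (1 + r ^ 2) ^ δ := by
    apply Continuous.mul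
    · exact continuous_id.div (by continuity) fun r => (one_add_sq_pos r).ne'
    · exact (cont_phi hδ).comp ((continuous_const.add (continuous_pow 2)).log
        fun r => (one_add_sq_pos r).ne')
  rw [intervalIntegral.integral_eq_sub_of_hasDerivAt (fun x _ => hasDeriv_G hδ x)
    (hcont.intervalIntegrable _ _)]
  simp [Real.zero_rpow (by linarith : δ + 1 ≠ 0)]

end aux

lemma one_add_sq_pos' (r : ℝ) : (0:ℝ) < 1 + r ^ 2 := by positivity

/-- antiderivative of r * (1+r^2)^p, p real -/
lemma hasDeriv_H (p : ℝ) (hp : p + 1 ≠ 0) (r : ℝ) :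
    HasDerivAt (fun r : ℝ => (1 + r ^ 2) ^ (p + 1) / (2 * (p + 1)))
      (r * (1 + r ^ 2) ^ p) r := by
  have houter : HasDerivAt (fun x : ℝ => x ^ (p + 1))
      ((p + 1) * (1 + r ^ 2) ^ p) (1 + r ^ 2) := by
    have := Real.hasDerivAt_rpow_const (x := 1 + r ^ 2) (p := p + 1)
      (Or.inl (one_add_sq_pos' r).ne')
    simpa using this
  have hinner : HasDerivAt (fun r : ℝ => 1 + r ^ 2) (2 * r) r := by
    simpa using ((hasDerivAt_pow 2 r).const_add 1)
  have := (houter.comp r hinner).div_const (2 * (p + 1))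
  refine this.congr_deriv ?_
  field_simp

/-- 1 - x^m ≤ m * (1 - x) for 0 ≤ x -/
lemma one_sub_pow_le (m : ℕ) {x : ℝ} (hx : 0 ≤ x) : 1 - x ^ m ≤ m * (1 - x) := by
  have h := one_add_mul_le_pow (a := x - 1) (by linarith) m
  have h2 : (1 + (x-1)) ^ m = x ^ m := by ring_nf
  rw [h2] at h
  linarith

-- ratio limit
lemma ratio_tendsto {γ : ℝ} (hγ : 0 < γ) (hγ1 : γ < 1) :
    Tendsto (fun ε : ℝ => Real.log (1 + (ε ^ (γ - 1)) ^ 2) / (-Real.log ε))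
      (nhdsWithin 0 (Set.Ioi 0)) (nhds (2 * (1 - γ))) := by
  have hmem : Set.Ioo (0:ℝ) 1 ∈ nhdsWithin (0:ℝ) (Set.Ioi 0) := by
    rw [mem_nhdsWithin_iff_exists_mem_nhds_inter]
    exact ⟨Set.Iio 1, Iio_mem_nhds (by norm_num), by
      intro x hx; exact ⟨hx.2, hx.1⟩⟩
  have key : ∀ ε ∈ Set.Ioo (0:ℝ) 1,
      Real.log (1 + (ε ^ (γ - 1)) ^ 2) / (-Real.log ε)
        = 2 * (1 - γ) + Real.log (ε ^ ((1 - γ) * 2) + 1) * (-Real.log ε)⁻¹ := by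
    intro ε hε
    have hε0 : (0:ℝ) < ε := hε.1
    have hlog : Real.log ε < 0 := Real.log_neg hε0 hε.2
    have hsq : (ε ^ (γ - 1)) ^ 2 = ε ^ ((γ - 1) * 2) := by
      rw [← Real.rpow_natCast (ε ^ (γ - 1)) 2, ← Real.rpow_mul hε0.le]
      norm_num
    have hprod : 1 + ε ^ ((γ - 1) * 2) = ε ^ ((γ - 1) * 2) * (ε ^ ((1 - γ) * 2) + 1) := by
      rw [mul_add, ← Real.rpow_add hε0, mul_one]
      have he : (γ - 1) * 2 + (1 - γ) * 2 = 0 := by ring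
      rw [he, Real.rpow_zero]
    rw [hsq, hprod]
    rw [Real.log_mul (by positivity) (by positivity), Real.log_rpow hε0]
    have hne : -Real.log ε ≠ 0 := by linarith
    have hL : Real.log ε ≠ 0 := ne_of_lt hlog
    field_simp
    ring
  rw [tendsto_congr' (eventuallyEq_of_mem hmem key)]
  have h1 : Tendsto (fun ε : ℝ => Real.log (ε ^ ((1 - γ) * 2) + 1))
      (nhdsWithin 0 (Set.Ioi 0)) (nhds 0) := by
    have hc : (0:ℝ) < (1 - γ) * 2 := by linarith
    have hpow : Tendsto (fun ε : ℝ => ε ^ ((1 - γ) * 2)) (nhdsWithin 0 (Set.Ioi 0)) (nhds 0) := by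
      have := (Real.continuousAt_rpow_const 0 ((1 - γ) * 2) (Or.inr hc.le)).tendsto
      rw [Real.zero_rpow hc.ne'] at this
      exact this.mono_left nhdsWithin_le_nhds
    have hlogc : Tendsto (fun x : ℝ => Real.log (x + 1)) (nhds 0) (nhds 0) := by
      have : ContinuousAt (fun x : ℝ => Real.log (x + 1)) 0 :=
        (continuousAt_id.add continuousAt_const).log (by norm_num)
      simpa using this.tendsto
    exact hlogc.comp hpow
  have h2 : Tendsto (fun ε : ℝ => (-Real.log ε)⁻¹) (nhdsWithin 0 (Set.Ioi 0)) (nhds 0) := by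
    apply tendsto_inv_atTop_zero.comp
    have : Tendsto Real.log (nhdsWithin 0 (Set.Ioi 0)) atBot :=
      Real.tendsto_log_nhdsNE_zero.mono_left (nhdsWithin_mono 0 (fun x hx => ne_of_gt hx))
    exact tendsto_neg_atBot_atTop.comp this
  have := (h1.mul h2).const_add (2 * (1 - γ))
  simpa using this

section ineq
variable {δ : ℝ}

lemma one_sub_pow_le' (m : ℕ) {x : ℝ} (hx : 0 ≤ x) : 1 - x ^ m ≤ m * (1 - x) := by
  have h := one_add_mul_le_pow (a := x - 1) (by linarith) m
  have h2 : (1 + (x - 1)) ^ m = x ^ m := by ring_nf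
  rw [h2] at h
  linarith

lemma f_rewrite (δ : ℝ) (m : ℕ) (r : ℝ) :
    r ^ (2 * (m + 1) - 1) / (1 + r ^ 2) ^ (m + 1) * Real.log (1 + r ^ 2) ^ δ
      = (r / (1 + r ^ 2) * Real.log (1 + r ^ 2) ^ δ) * (r ^ 2 / (1 + r ^ 2)) ^ m := by
  have hP : (0:ℝ) < 1 + r ^ 2 := by positivity
  have h1 : 2 * (m + 1) - 1 = 2 * m + 1 := by omega
  rw [h1, pow_succ, pow_mul, pow_succ, div_pow]
  field_simp
  ring

lemma bound_pt (hδ : 0 ≤ δ) (m : ℕ) {s : ℝ} (hs : 0 < s) {r : ℝ} (hr : 0 ≤ r) :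
    (r / (1 + r ^ 2) * Real.log (1 + r ^ 2) ^ δ) * (1 - (r ^ 2 / (1 + r ^ 2)) ^ m)
      ≤ ((m : ℝ) / s ^ δ) * (r * (1 + r ^ 2) ^ (s * δ - 2)) := by
  have hP : (0:ℝ) < 1 + r ^ 2 := by positivity
  have hlogn : 0 ≤ Real.log (1 + r ^ 2) := Real.log_nonneg (by nlinarith [sq_nonneg r])
  have hx0 : 0 ≤ r ^ 2 / (1 + r ^ 2) := by positivity
  have hg0 : 0 ≤ r / (1 + r ^ 2) * Real.log (1 + r ^ 2) ^ δ :=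
    mul_nonneg (by positivity) (Real.rpow_nonneg hlogn δ)
  have key2 : Real.log (1 + r ^ 2) ^ δ ≤ (1 + r ^ 2) ^ (s * δ) / s ^ δ := by
    have h1 : Real.log (1 + r ^ 2) ≤ (1 + r ^ 2) ^ s / s :=
      Real.log_le_rpow_div hP.le hs
    have h2 := Real.rpow_le_rpow hlogn h1 hδ
    calc Real.log (1 + r ^ 2) ^ δ ≤ ((1 + r ^ 2) ^ s / s) ^ δ := h2
      _ = (1 + r ^ 2) ^ (s * δ) / s ^ δ := by
          rw [Real.div_rpow (Real.rpow_nonneg hP.le s) hs.le, ← Real.rpow_mul hP.le]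
  calc (r / (1 + r ^ 2) * Real.log (1 + r ^ 2) ^ δ) * (1 - (r ^ 2 / (1 + r ^ 2)) ^ m)
      ≤ (r / (1 + r ^ 2) * Real.log (1 + r ^ 2) ^ δ) * ((m : ℝ) * (1 - r ^ 2 / (1 + r ^ 2))) :=
        mul_le_mul_of_nonneg_left (one_sub_pow_le' m hx0) hg0
    _ = (m : ℝ) * (r * Real.log (1 + r ^ 2) ^ δ / (1 + r ^ 2) ^ 2) := by
        field_simp
        ring
    _ ≤ (m : ℝ) * (r * ((1 + r ^ 2) ^ (s * δ) / s ^ δ) / (1 + r ^ 2) ^ 2) := by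
        gcongr
    _ = ((m : ℝ) / s ^ δ) * (r * (1 + r ^ 2) ^ (s * δ - 2)) := by
        rw [Real.rpow_sub hP]
        have : (1 + r ^ 2 : ℝ) ^ (2 : ℝ) = (1 + r ^ 2) ^ (2 : ℕ) := by
          rw [← Real.rpow_natCast (1 + r ^ 2) 2]; norm_num
        rw [this]
        have hsδ : (0:ℝ) < s ^ δ := Real.rpow_pos_of_pos hs δ
        field_simp

lemma h_nonneg_pt (hδ : 0 ≤ δ) (m : ℕ) {r : ℝ} (hr : 0 ≤ r) :
    0 ≤ (r / (1 + r ^ 2) * Real.log (1 + r ^ 2) ^ δ) * (1 - (r ^ 2 / (1 + r ^ 2)) ^ m) := by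
  have hP : (0:ℝ) < 1 + r ^ 2 := by positivity
  have hlogn : 0 ≤ Real.log (1 + r ^ 2) := Real.log_nonneg (by nlinarith [sq_nonneg r])
  have hx0 : 0 ≤ r ^ 2 / (1 + r ^ 2) := by positivity
  have hx1 : r ^ 2 / (1 + r ^ 2) ≤ 1 := by
    rw [div_le_one hP]; nlinarith [sq_nonneg r]
  exact mul_nonneg (mul_nonneg (by positivity) (Real.rpow_nonneg hlogn δ))
    (sub_nonneg.2 (pow_le_one₀ hx0 hx1))

end ineq

lemma hasDeriv_H' (p : ℝ) (hp : p + 1 ≠ 0) (r : ℝ) :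
    HasDerivAt (fun r : ℝ => (1 + r ^ 2) ^ (p + 1) / (2 * (p + 1)))
      (r * (1 + r ^ 2) ^ p) r := by
  have hP : (0:ℝ) < 1 + r ^ 2 := by positivity
  have houter : HasDerivAt (fun x : ℝ => x ^ (p + 1))
      ((p + 1) * (1 + r ^ 2) ^ p) (1 + r ^ 2) := by
    have := Real.hasDerivAt_rpow_const (x := 1 + r ^ 2) (p := p + 1) (Or.inl hP.ne')
    simpa using this
  have hinner : HasDerivAt (fun r : ℝ => 1 + r ^ 2) (2 * r) r := by
    simpa using ((hasDerivAt_pow 2 r).const_add 1)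
  have := (houter.comp r hinner).div_const (2 * (p + 1))
  refine this.congr_deriv ?_
  field_simp

lemma cont_b (p : ℝ) : Continuous fun r : ℝ => r * (1 + r ^ 2) ^ p := by
  apply continuous_id.mul
  exact (continuous_const.add (continuous_pow 2)).rpow_const
    fun r => Or.inl (one_add_sq_pos' r).ne'

lemma integral_b_le (p : ℝ) (hp : p + 1 < 0) {T : ℝ} (hT : 0 ≤ T) :
    (∫ r in (0:ℝ)..T, r * (1 + r ^ 2) ^ p) ≤ 1 / (-(2 * (p + 1))) := by
  rw [intervalIntegral.integral_eq_sub_of_hasDerivAt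
      (fun x _ => hasDeriv_H' p hp.ne x) ((cont_b p).intervalIntegrable _ _)]
  have hPT : (0:ℝ) < 1 + T ^ 2 := by positivity
  have h1 : (1:ℝ) + 0 ^ 2 = 1 := by norm_num
  rw [h1, Real.one_rpow]
  have hA0 : 0 ≤ (1 + T ^ 2) ^ (p + 1) := (Real.rpow_pos_of_pos hPT _).le
  have hE : (1 + T ^ 2) ^ (p + 1) / (2 * (p + 1)) - 1 / (2 * (p + 1))
      = (1 - (1 + T ^ 2) ^ (p + 1)) / (-(2 * (p + 1))) := by
    have h2 : (2:ℝ) * (p + 1) ≠ 0 := by intro h; nlinarith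
    rw [div_neg, div_sub_div_same, ← neg_div, neg_sub]
  rw [hE]
  gcongr
  · linarith
  · linarith


theorem stmt_8 (n : ℕ) (hn : 1 ≤ n) (δ γ : ℝ) (hδ : 0 ≤ δ) (hγ : 0 < γ) (hγ1 : γ < 1) :
    Filter.Tendsto
      (fun ε : ℝ => (1 / (-Real.log ε) ^ (δ + 1)) *
        ∫ r in (0:ℝ)..(ε ^ (γ - 1)),
          r ^ (2 * n - 1) / (1 + r ^ 2) ^ n * (Real.log (1 + r ^ 2)) ^ δ)
      (nhdsWithin 0 (Set.Ioi 0))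
      (nhds ((2 * (1 - γ)) ^ (δ + 1) / (2 * (1 + δ)))) := by
  obtain ⟨m, rfl⟩ : ∃ m, n = m + 1 := ⟨n - 1, by omega⟩
  set s : ℝ := 1 / (2 * (δ + 1)) with hs_def
  have hs : 0 < s := by rw [hs_def]; positivity
  have hsδ : s * δ < 1 := by
    rw [hs_def, div_mul_eq_mul_div, one_mul, div_lt_one (by positivity)]
    linarith
  set p : ℝ := s * δ - 2 with hp_def
  have hp1 : p + 1 < 0 := by rw [hp_def]; linarith
  set c : ℝ := (m : ℝ) / s ^ δ with hc_def
  have hc : 0 ≤ c := by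
    rw [hc_def]
    exact div_nonneg (Nat.cast_nonneg m) (Real.rpow_nonneg hs.le δ)
  set C : ℝ := c * (1 / (-(2 * (p + 1)))) with hC_def
  -- continuity
  have hlogcont : Continuous fun r : ℝ => Real.log (1 + r ^ 2) ^ δ :=
    (cont_phi hδ).comp ((continuous_const.add (continuous_pow 2)).log
      fun r => (one_add_sq_pos r).ne')
  have hg_cont : Continuous fun r : ℝ => r / (1 + r ^ 2) * Real.log (1 + r ^ 2) ^ δ :=
    (continuous_id.div (continuous_const.add (continuous_pow 2))
      fun r => (one_add_sq_pos r).ne').mul hlogcont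
  have hf_cont : Continuous fun r : ℝ =>
      r ^ (2 * (m + 1) - 1) / (1 + r ^ 2) ^ (m + 1) * Real.log (1 + r ^ 2) ^ δ :=
    ((continuous_pow _).div ((continuous_const.add (continuous_pow 2)).pow _)
      fun r => pow_ne_zero _ (one_add_sq_pos r).ne').mul hlogcont
  -- pointwise facts about the difference
  have hdiff_eq : ∀ r : ℝ,
      r / (1 + r ^ 2) * Real.log (1 + r ^ 2) ^ δ
        - r ^ (2 * (m + 1) - 1) / (1 + r ^ 2) ^ (m + 1) * Real.log (1 + r ^ 2) ^ δ
      = (r / (1 + r ^ 2) * Real.log (1 + r ^ 2) ^ δ) * (1 - (r ^ 2 / (1 + r ^ 2)) ^ m) := by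
    intro r
    rw [f_rewrite δ m r]
    ring
  -- bounds on the correction integral
  have hI_bounds : ∀ T : ℝ, 0 ≤ T →
      0 ≤ (∫ r in (0:ℝ)..T,
          (r / (1 + r ^ 2) * Real.log (1 + r ^ 2) ^ δ
            - r ^ (2 * (m + 1) - 1) / (1 + r ^ 2) ^ (m + 1) * Real.log (1 + r ^ 2) ^ δ))
      ∧ (∫ r in (0:ℝ)..T,
          (r / (1 + r ^ 2) * Real.log (1 + r ^ 2) ^ δ
            - r ^ (2 * (m + 1) - 1) / (1 + r ^ 2) ^ (m + 1) * Real.log (1 + r ^ 2) ^ δ)) ≤ C := by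
    intro T hT
    constructor
    · apply intervalIntegral.integral_nonneg hT
      intro r hr
      rw [hdiff_eq r]
      exact h_nonneg_pt hδ m hr.1
    · calc (∫ r in (0:ℝ)..T,
            (r / (1 + r ^ 2) * Real.log (1 + r ^ 2) ^ δ
              - r ^ (2 * (m + 1) - 1) / (1 + r ^ 2) ^ (m + 1) * Real.log (1 + r ^ 2) ^ δ))
          ≤ ∫ r in (0:ℝ)..T, c * (r * (1 + r ^ 2) ^ p) := by
            apply intervalIntegral.integral_mono_on hT
              ((hg_cont.sub hf_cont).intervalIntegrable _ _)
              ((continuous_const.mul (cont_b p)).intervalIntegrable _ _)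
            intro r hr
            simp only [Pi.sub_apply, Pi.mul_apply]
            rw [hdiff_eq r]
            have := bound_pt hδ m hs hr.1
            rw [hp_def]
            exact this
        _ = c * ∫ r in (0:ℝ)..T, r * (1 + r ^ 2) ^ p := by
            rw [intervalIntegral.integral_const_mul]
        _ ≤ C := by
            rw [hC_def]
            exact mul_le_mul_of_nonneg_left (integral_b_le p hp1 hT) hc
  have hIoo : Set.Ioo (0:ℝ) 1 ∈ nhdsWithin (0:ℝ) (Set.Ioi 0) := by
    rw [mem_nhdsWithin_iff_exists_mem_nhds_inter]
    exact ⟨Set.Iio 1, Iio_mem_nhds (by norm_num), by intro x hx; exact ⟨hx.2, hx.1⟩⟩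
  -- the two pieces
  set A : ℝ → ℝ := fun ε =>
    (Real.log (1 + (ε ^ (γ - 1)) ^ 2) / (-Real.log ε)) ^ (δ + 1) / (2 * (δ + 1)) with hA_def
  set B : ℝ → ℝ := fun ε =>
    (∫ r in (0:ℝ)..(ε ^ (γ - 1)),
        (r / (1 + r ^ 2) * Real.log (1 + r ^ 2) ^ δ
          - r ^ (2 * (m + 1) - 1) / (1 + r ^ 2) ^ (m + 1) * Real.log (1 + r ^ 2) ^ δ))
      / (-Real.log ε) ^ (δ + 1) with hB_def
  have hkey : ∀ ε ∈ Set.Ioo (0:ℝ) 1,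
      A ε - B ε = (1 / (-Real.log ε) ^ (δ + 1)) *
        ∫ r in (0:ℝ)..(ε ^ (γ - 1)),
          r ^ (2 * (m + 1) - 1) / (1 + r ^ 2) ^ (m + 1) * (Real.log (1 + r ^ 2)) ^ δ := by
    intro ε hε
    have hε0 : (0:ℝ) < ε := hε.1
    have hl : 0 < -Real.log ε := by
      have := Real.log_neg hε0 hε.2; linarith
    have hL : 0 < (-Real.log ε) ^ (δ + 1) := Real.rpow_pos_of_pos hl _
    have hsub : (∫ r in (0:ℝ)..(ε ^ (γ - 1)),
          r ^ (2 * (m + 1) - 1) / (1 + r ^ 2) ^ (m + 1) * Real.log (1 + r ^ 2) ^ δ)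
        = (∫ r in (0:ℝ)..(ε ^ (γ - 1)), r / (1 + r ^ 2) * Real.log (1 + r ^ 2) ^ δ)
          - ∫ r in (0:ℝ)..(ε ^ (γ - 1)),
            (r / (1 + r ^ 2) * Real.log (1 + r ^ 2) ^ δ
              - r ^ (2 * (m + 1) - 1) / (1 + r ^ 2) ^ (m + 1) * Real.log (1 + r ^ 2) ^ δ) := by
      rw [intervalIntegral.integral_sub (hg_cont.intervalIntegrable _ _)
        (hf_cont.intervalIntegrable _ _)]
      ring
    have hlog0 : 0 ≤ Real.log (1 + (ε ^ (γ - 1)) ^ 2) := log_one_add_sq_nonneg _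
    simp only [hA_def, hB_def]
    rw [hsub, integral_g hδ, Real.div_rpow hlog0 hl.le]
    have hδ1 : ((2:ℝ) * (δ + 1)) ≠ 0 := by positivity
    field_simp
  -- limit of A
  have hA_tendsto : Tendsto A (nhdsWithin 0 (Set.Ioi 0))
      (nhds ((2 * (1 - γ)) ^ (δ + 1) / (2 * (δ + 1)))) := by
    have hratio := ratio_tendsto hγ hγ1
    have hcont : ContinuousAt (fun x : ℝ => x ^ (δ + 1) / (2 * (δ + 1))) (2 * (1 - γ)) := by
      apply ContinuousAt.div_const
      exact Real.continuousAt_rpow_const _ _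
        (Or.inl (ne_of_gt (by linarith : (0:ℝ) < 2 * (1 - γ))))
    exact (hcont.tendsto.comp hratio)
  -- limit of B
  have hB_tendsto : Tendsto B (nhdsWithin 0 (Set.Ioi 0)) (nhds 0) := by
    have hupper : Tendsto (fun ε : ℝ => C * ((-Real.log ε) ^ (δ + 1))⁻¹)
        (nhdsWithin 0 (Set.Ioi 0)) (nhds 0) := by
      have h1 : Tendsto (fun ε : ℝ => -Real.log ε) (nhdsWithin 0 (Set.Ioi 0)) atTop := by
        apply tendsto_neg_atBot_atTop.comp
        exact Real.tendsto_log_nhdsNE_zero.mono_left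
          (nhdsWithin_mono 0 (fun x hx => ne_of_gt hx))
      have h2 : Tendsto (fun ε : ℝ => ((-Real.log ε) ^ (δ + 1))⁻¹)
          (nhdsWithin 0 (Set.Ioi 0)) (nhds 0) :=
        tendsto_inv_atTop_zero.comp ((tendsto_rpow_atTop (by linarith)).comp h1)
      simpa using h2.const_mul C
    apply tendsto_of_tendsto_of_tendsto_of_le_of_le' tendsto_const_nhds hupper
    · filter_upwards [hIoo] with ε hε
      have hε0 : (0:ℝ) < ε := hε.1
      have hl : 0 < -Real.log ε := by
        have := Real.log_neg hε0 hε.2; linarith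
      have hL : 0 < (-Real.log ε) ^ (δ + 1) := Real.rpow_pos_of_pos hl _
      have hT0 : 0 ≤ ε ^ (γ - 1) := Real.rpow_nonneg hε0.le _
      exact div_nonneg (hI_bounds _ hT0).1 hL.le
    · filter_upwards [hIoo] with ε hε
      have hε0 : (0:ℝ) < ε := hε.1
      have hl : 0 < -Real.log ε := by
        have := Real.log_neg hε0 hε.2; linarith
      have hL : 0 < (-Real.log ε) ^ (δ + 1) := Real.rpow_pos_of_pos hl _
      have hT0 : 0 ≤ ε ^ (γ - 1) := Real.rpow_nonneg hε0.le _
      simp only [hB_def]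
      rw [div_eq_mul_inv]
      exact mul_le_mul_of_nonneg_right (hI_bounds _ hT0).2 (by positivity)
  -- combine
  have hfinal := hA_tendsto.sub hB_tendsto
  rw [sub_zero] at hfinal
  have hval : (2 * (1 - γ)) ^ (δ + 1) / (2 * (1 + δ))
      = (2 * (1 - γ)) ^ (δ + 1) / (2 * (δ + 1)) := by ring_nf
  rw [hval]
  apply hfinal.congr'
  filter_upwards [hIoo] with ε hε
  exact hkey ε hε
end

section
/- Let $n \ge 1$, $\beta > n$, $\delta \ge 0$, and $0 < \gamma < 1$. Then $\lim_{\varepsilon \to 0^+} \frac{1}{\varepsilon^{(\beta-n)(\gamma-1)}(-\ln\varepsilon)^\delta} \int_0^{\varepsilon^{\gamma-1}} \frac{r^{\beta+n-1}}{(1+r^2)^n}\left(\ln(1+r^2)\right)^\delta\,dr = \frac{(2(1-\gamma))^\delta}{\beta-n}$. -/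
open MeasureTheory intervalIntegral Set Filter

section Aux

lemma integrable_of_cont (a : ℝ) (h : ℝ → ℝ) (hh : ContinuousOn h (Ici a)) (u v : ℝ)
    (hu : a ≤ u) (hv : a ≤ v) : IntervalIntegrable h volume u v := by
  apply (hh.mono ?_).intervalIntegrable
  intro x hx
  simp only [Set.mem_uIcc] at hx
  rcases hx with ⟨h1, _⟩ | ⟨h1, _⟩ <;> simp only [Set.mem_Ici] <;> linarith

lemma cesaro_aux (f g : ℝ → ℝ) (L : ℝ) (hf : ContinuousOn f (Ici 1)) (hg : ContinuousOn g (Ici 1))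
    (hgpos : ∀ x ∈ Ici (1:ℝ), 0 < g x)
    (hdiv : Tendsto (fun M => ∫ x in (1:ℝ)..M, g x) atTop atTop)
    (hlim : Tendsto (fun x => f x / g x) atTop (nhds L)) :
    Tendsto (fun M => (∫ x in (1:ℝ)..M, f x) / (∫ x in (1:ℝ)..M, g x)) atTop (nhds L) := by
  set F : ℝ → ℝ := fun M => ∫ x in (1:ℝ)..M, f x with hF
  set Gd : ℝ → ℝ := fun M => ∫ x in (1:ℝ)..M, g x with hGd
  have key : (fun M => F M - L * Gd M) =o[atTop] Gd := by
    rw [Asymptotics.isLittleO_iff]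
    intro c hc
    have hev : ∀ᶠ x in atTop, |f x / g x - L| ≤ c / 2 := by
      have := Metric.tendsto_nhds.mp hlim (c/2) (by positivity)
      filter_upwards [this] with x hx
      rw [Real.dist_eq] at hx; exact hx.le
    rw [eventually_atTop] at hev
    obtain ⟨b0, hb⟩ := hev
    set b := max b0 1 with hbdef
    have hb1 : (1:ℝ) ≤ b := le_max_right _ _
    have hbnd : ∀ x, b ≤ x → |f x - L * g x| ≤ c / 2 * g x := by
      intro x hx
      have hx1 : (1:ℝ) ≤ x := le_trans hb1 hx
      have hgx := hgpos x hx1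
      have := hb x (le_trans (le_max_left _ _) hx)
      have heq : f x / g x - L = (f x - L * g x) / g x := by field_simp
      rw [heq, abs_div, abs_of_pos hgx, div_le_iff₀ hgx] at this
      linarith
    set C := |∫ x in (1:ℝ)..b, (f x - L * g x)| with hC
    have hmain : ∀ M, b ≤ M → |F M - L * Gd M| ≤ C + c / 2 * Gd M := by
      intro M hM
      have hM1 : (1:ℝ) ≤ M := le_trans hb1 hM
      have i1 : IntervalIntegrable f volume 1 b := integrable_of_cont 1 f hf 1 b le_rfl hb1
      have i2 : IntervalIntegrable f volume b M := integrable_of_cont 1 f hf b M hb1 hM1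
      have i3 : IntervalIntegrable g volume 1 b := integrable_of_cont 1 g hg 1 b le_rfl hb1
      have i4 : IntervalIntegrable g volume b M := integrable_of_cont 1 g hg b M hb1 hM1
      have hFsplit : F M = (∫ x in (1:ℝ)..b, f x) + ∫ x in b..M, f x :=
        (intervalIntegral.integral_add_adjacent_intervals i1 i2).symm
      have hGsplit : Gd M = (∫ x in (1:ℝ)..b, g x) + ∫ x in b..M, g x :=
        (intervalIntegral.integral_add_adjacent_intervals i3 i4).symm
      have heq : F M - L * Gd M = (∫ x in (1:ℝ)..b, (f x - L * g x)) + ∫ x in b..M, (f x - L * g x) := by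
        rw [hFsplit, hGsplit, intervalIntegral.integral_sub i1 (i3.const_mul L),
          intervalIntegral.integral_sub i2 (i4.const_mul L),
          intervalIntegral.integral_const_mul, intervalIntegral.integral_const_mul]
        ring
      have hbound2 : |∫ x in b..M, (f x - L * g x)| ≤ c / 2 * ∫ x in b..M, g x := by
        rw [← intervalIntegral.integral_const_mul]
        calc |∫ x in b..M, (f x - L * g x)| ≤ ∫ x in b..M, |f x - L * g x| :=
              intervalIntegral.abs_integral_le_integral_abs hM
          _ ≤ ∫ x in b..M, c / 2 * g x := by
              apply intervalIntegral.integral_mono_on hM (i2.sub (i4.const_mul L)).abs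
                (i4.const_mul (c/2))
              intro x hx
              exact hbnd x hx.1
      have hgb : 0 ≤ ∫ x in (1:ℝ)..b, g x := by
        apply intervalIntegral.integral_nonneg hb1
        intro x hx; exact (hgpos x hx.1).le
      calc |F M - L * Gd M| ≤ C + |∫ x in b..M, (f x - L * g x)| := by
            rw [heq]; exact abs_add_le _ _
        _ ≤ C + c / 2 * ∫ x in b..M, g x := by linarith
        _ ≤ C + c / 2 * Gd M := by
            rw [hGsplit]; nlinarith
    have hevC : ∀ᶠ M in atTop, C ≤ c / 2 * Gd M := by
      have : Tendsto (fun M => c / 2 * Gd M) atTop atTop :=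
        hdiv.const_mul_atTop (by positivity)
      exact this.eventually_ge_atTop C
    have hevpos : ∀ᶠ M in atTop, 0 ≤ Gd M := hdiv.eventually_ge_atTop 0
    filter_upwards [hevC, hevpos, eventually_ge_atTop b] with M h1 h2 h3
    rw [Real.norm_eq_abs, Real.norm_eq_abs, abs_of_nonneg h2]
    calc |F M - L * Gd M| ≤ C + c / 2 * Gd M := hmain M h3
      _ ≤ c / 2 * Gd M + c / 2 * Gd M := by linarith
      _ = c * Gd M := by ring
  have h0 := key.tendsto_div_nhds_zero
  have : Tendsto (fun M => (F M - L * Gd M) / Gd M + L) atTop (nhds L) := by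
    simpa using h0.add_const L
  apply this.congr'
  have hevpos : ∀ᶠ M in atTop, 0 < Gd M := hdiv.eventually_gt_atTop 0
  filter_upwards [hevpos] with M hM
  show _ = F M / Gd M
  rw [div_add' _ _ _ hM.ne', sub_add_cancel]

lemma hasDerivAt_G (b δ : ℝ) (x : ℝ) (hx : 1 ≤ x) :
    HasDerivAt (fun y : ℝ => y ^ b * (Real.log (1 + y^2)) ^ δ)
      (b * x ^ (b-1) * (Real.log (1 + x^2)) ^ δ
        + x ^ b * (2 * x / (1 + x^2) * (δ * (Real.log (1 + x^2)) ^ (δ-1)))) x := by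
  have hx0 : x ≠ 0 := by positivity
  have hpos : (0:ℝ) < 1 + x^2 := by positivity
  have hlog : 0 < Real.log (1 + x^2) := Real.log_pos (by nlinarith)
  have h1 : HasDerivAt (fun y : ℝ => y ^ b) (b * x ^ (b-1)) x :=
    Real.hasDerivAt_rpow_const (Or.inl hx0)
  have hinner : HasDerivAt (fun y : ℝ => 1 + y^2) (2 * x) x := by
    simpa using (hasDerivAt_pow 2 x).const_add 1
  have hlogd : HasDerivAt (fun y : ℝ => Real.log (1 + y^2)) (2 * x / (1 + x^2)) x :=
    hinner.log (ne_of_gt hpos)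
  have h2 : HasDerivAt (fun y : ℝ => (Real.log (1 + y^2)) ^ δ)
      (2 * x / (1 + x^2) * (δ * (Real.log (1 + x^2)) ^ (δ-1))) x := by
    have := hlogd.rpow_const (p := δ) (Or.inl (ne_of_gt hlog))
    convert this using 1; ring
  exact h1.mul h2

lemma cont_f (n : ℕ) (β δ : ℝ) (hβ : 0 ≤ β + n - 1) (hδ : 0 ≤ δ) :
    ContinuousOn (fun r : ℝ => r ^ (β + n - 1) / (1 + r^2) ^ n * (Real.log (1 + r^2)) ^ δ)
      (Ici 0) := by
  intro r _
  apply ContinuousAt.continuousWithinAt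
  have hpos : (0:ℝ) < 1 + r^2 := by positivity
  have c1 : ContinuousAt (fun r : ℝ => r ^ (β + n - 1)) r :=
    Real.continuousAt_rpow_const r _ (Or.inr hβ)
  have c2 : ContinuousAt (fun r : ℝ => (1 + r^2) ^ n) r := by fun_prop
  have cinner : ContinuousAt (fun r : ℝ => Real.log (1 + r^2)) r :=
    ContinuousAt.log (by fun_prop) (ne_of_gt hpos)
  have c3 : ContinuousAt (fun r : ℝ => (Real.log (1 + r^2)) ^ δ) r :=
    cinner.rpow_const (Or.inr hδ)
  exact (c1.div c2 (by positivity)).mul c3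

lemma cont_g (b δ : ℝ) :
    ContinuousOn (fun x : ℝ => b * x ^ (b-1) * (Real.log (1 + x^2)) ^ δ
        + x ^ b * (2 * x / (1 + x^2) * (δ * (Real.log (1 + x^2)) ^ (δ-1)))) (Ici 1) := by
  intro x hx
  simp only [mem_Ici] at hx
  apply ContinuousAt.continuousWithinAt
  have hx0 : x ≠ 0 := by positivity
  have hpos : (0:ℝ) < 1 + x^2 := by positivity
  have hlog : 0 < Real.log (1 + x^2) := Real.log_pos (by nlinarith)
  have cinner : ContinuousAt (fun r : ℝ => Real.log (1 + r^2)) x :=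
    ContinuousAt.log (by fun_prop) (ne_of_gt hpos)
  have c1 : ContinuousAt (fun y : ℝ => y ^ (b-1)) x :=
    Real.continuousAt_rpow_const x _ (Or.inl hx0)
  have c2 : ContinuousAt (fun y : ℝ => y ^ b) x :=
    Real.continuousAt_rpow_const x _ (Or.inl hx0)
  have c3 : ContinuousAt (fun r : ℝ => (Real.log (1 + r^2)) ^ δ) x :=
    cinner.rpow_const (Or.inl (ne_of_gt hlog))
  have c4 : ContinuousAt (fun r : ℝ => (Real.log (1 + r^2)) ^ (δ-1)) x :=
    cinner.rpow_const (Or.inl (ne_of_gt hlog))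
  have c5 : ContinuousAt (fun y : ℝ => 2 * y / (1 + y^2)) x := by
    apply ContinuousAt.div (by fun_prop) (by fun_prop) (by positivity)
  exact ((continuousAt_const.mul c1).mul c3).add (c2.mul (c5.mul (continuousAt_const.mul c4)))

lemma g_pos' (b δ : ℝ) (hb : 0 < b) (hδ : 0 ≤ δ) (x : ℝ) (hx : x ∈ Ici (1:ℝ)) :
    0 < b * x ^ (b-1) * (Real.log (1 + x^2)) ^ δ
        + x ^ b * (2 * x / (1 + x^2) * (δ * (Real.log (1 + x^2)) ^ (δ-1))) := by
  simp only [mem_Ici] at hx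
  have hx0 : (0:ℝ) < x := by linarith
  have hlog : 0 < Real.log (1 + x^2) := Real.log_pos (by nlinarith)
  have h1 : 0 < b * x ^ (b-1) * (Real.log (1 + x^2)) ^ δ := by
    have := Real.rpow_pos_of_pos hx0 (b-1)
    have := Real.rpow_pos_of_pos hlog δ
    positivity
  have h2 : 0 ≤ x ^ b * (2 * x / (1 + x^2) * (δ * (Real.log (1 + x^2)) ^ (δ-1))) := by
    have := (Real.rpow_pos_of_pos hx0 b).le
    have := (Real.rpow_pos_of_pos hlog (δ-1)).le
    positivity
  linarith

lemma tendsto_one_add_sq : Tendsto (fun x : ℝ => 1 + x^2) atTop atTop :=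
  tendsto_atTop_add_const_left atTop 1 (tendsto_pow_atTop two_ne_zero)

lemma tendsto_u : Tendsto (fun x : ℝ => x^2/(1+x^2)) atTop (nhds 1) := by
  have h := tendsto_one_add_sq.inv_tendsto_atTop
  have h2 : Tendsto (fun x : ℝ => 1 - (1+x^2)⁻¹) atTop (nhds 1) := by
    simpa using tendsto_const_nhds.sub h
  apply h2.congr
  intro x
  have : (1:ℝ) + x^2 ≠ 0 := by positivity
  field_simp
  ring

lemma tendsto_v : Tendsto (fun x : ℝ => Real.log (1+x^2)) atTop atTop :=
  Real.tendsto_log_atTop.comp tendsto_one_add_sq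

lemma tendsto_mul_rpow (b δ : ℝ) (hb : 0 < b) (hδ : 0 ≤ δ) (h : ℝ → ℝ)
    (hh : Tendsto h atTop atTop) : Tendsto (fun M : ℝ => M ^ b * (h M) ^ δ) atTop atTop := by
  apply tendsto_atTop_mono' atTop _ (tendsto_rpow_atTop hb)
  filter_upwards [hh.eventually_ge_atTop 1, eventually_gt_atTop (0:ℝ)] with M h1 h2
  have hMb := (Real.rpow_pos_of_pos h2 b).le
  have : (1:ℝ) ≤ (h M) ^ δ := by
    calc (1:ℝ) = 1 ^ δ := (Real.one_rpow δ).symm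
    _ ≤ (h M) ^ δ := Real.rpow_le_rpow zero_le_one h1 hδ
  exact le_mul_of_one_le_right hMb this

lemma tendsto_log_ratio : Tendsto (fun M : ℝ => Real.log (1+M^2) / Real.log M) atTop (nhds 2) := by
  have hw : Tendsto (fun M : ℝ => Real.log ((M⁻¹)^2 + 1)) atTop (nhds 0) := by
    have h1 : Tendsto (fun M : ℝ => (M⁻¹)^2 + 1) atTop (nhds 1) := by
      simpa using ((tendsto_inv_atTop_zero.pow 2).add tendsto_const_nhds (f := fun M : ℝ => (M⁻¹)^2))
    have := (Real.continuousAt_log one_ne_zero).tendsto.comp h1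
    simpa [Function.comp_def] using this
  have hmain : Tendsto (fun M : ℝ => 2 + Real.log ((M⁻¹)^2 + 1) / Real.log M) atTop (nhds 2) := by
    simpa using tendsto_const_nhds.add (hw.div_atTop Real.tendsto_log_atTop)
  apply hmain.congr'
  filter_upwards [eventually_ge_atTop (2:ℝ)] with M hM
  have hM0 : (0:ℝ) < M := by linarith
  have hlogM : 0 < Real.log M := Real.log_pos (by linarith)
  have hsplit : Real.log (1+M^2) = 2 * Real.log M + Real.log ((M⁻¹)^2 + 1) := by
    have h1 : (1:ℝ) + M^2 = M^2 * ((M⁻¹)^2 + 1) := by field_simp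
    rw [h1, Real.log_mul (by positivity) (by positivity), Real.log_pow]
    push_cast; ring
  rw [hsplit]
  field_simp

lemma tendsto_fg (n : ℕ) (β δ : ℝ) (hb : 0 < β - n) (hδ : 0 ≤ δ) :
    Tendsto (fun x : ℝ => (x ^ (β + n - 1) / (1 + x^2) ^ n * (Real.log (1 + x^2)) ^ δ) /
      ((β - n) * x ^ (β - n - 1) * (Real.log (1 + x^2)) ^ δ
        + x ^ (β - n) * (2 * x / (1 + x^2) * (δ * (Real.log (1 + x^2)) ^ (δ - 1)))))
      atTop (nhds (1 / (β - n))) := by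
  set b := β - (n:ℝ) with hbdef
  have hlim1 : Tendsto (fun x : ℝ => (x^2/(1+x^2))^n /
      (b + 2*δ*(x^2/(1+x^2)/Real.log (1+x^2)))) atTop (nhds (1/b)) := by
    have hnum : Tendsto (fun x : ℝ => (x^2/(1+x^2))^n) atTop (nhds 1) := by
      simpa using tendsto_u.pow n
    have hden : Tendsto (fun x : ℝ => b + 2*δ*(x^2/(1+x^2)/Real.log (1+x^2))) atTop (nhds b) := by
      simpa using tendsto_const_nhds.add ((tendsto_u.div_atTop tendsto_v).const_mul (2*δ))
        (f := fun _ : ℝ => b)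
    exact hnum.div hden (ne_of_gt hb)
  apply hlim1.congr'
  filter_upwards [eventually_ge_atTop (1:ℝ)] with x hx
  have hx0 : (0:ℝ) < x := by linarith
  have hpos : (0:ℝ) < 1 + x^2 := by positivity
  have hv : 0 < Real.log (1+x^2) := Real.log_pos (by nlinarith)
  have e1 : x ^ (β + (n:ℝ) - 1) = x ^ (b-1) * (x^2)^n := by
    rw [← pow_mul, ← Real.rpow_natCast x (2*n), ← Real.rpow_add hx0]
    congr 1
    push_cast
    ring
  have e2 : x ^ b = x ^ (b-1) * x := by
    rw [show b = (b-1)+1 by ring, Real.rpow_add_one hx0.ne']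
    ring_nf
  have e3 : (Real.log (1+x^2)) ^ δ = (Real.log (1+x^2)) ^ (δ-1) * Real.log (1+x^2) := by
    have h := Real.rpow_add_one hv.ne' (δ-1)
    rw [sub_add_cancel] at h
    exact h
  have hA : 0 < x ^ (b-1) * (Real.log (1+x^2)) ^ δ := by
    have := Real.rpow_pos_of_pos hx0 (b-1)
    have := Real.rpow_pos_of_pos hv δ
    positivity
  have hgx : b * x ^ (b - 1) * (Real.log (1 + x^2)) ^ δ
        + x ^ b * (2 * x / (1 + x^2) * (δ * (Real.log (1 + x^2)) ^ (δ - 1)))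
      = (b + 2*δ*(x^2/(1+x^2)/Real.log (1+x^2))) * (x ^ (b-1) * (Real.log (1+x^2)) ^ δ) := by
    rw [e2, e3]
    field_simp
  have hfx : x ^ (β + (n:ℝ) - 1) / (1 + x^2) ^ n * (Real.log (1 + x^2)) ^ δ
      = (x^2/(1+x^2))^n * (x ^ (b-1) * (Real.log (1+x^2)) ^ δ) := by
    rw [e1, div_pow]
    field_simp
  rw [hfx, hgx, mul_div_mul_right _ _ (ne_of_gt hA)]

end Aux

theorem stmt_9 (n : ℕ) (hn : 1 ≤ n) (β δ γ : ℝ) (hβ : (n : ℝ) < β) (hδ : 0 ≤ δ)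
    (hγ : 0 < γ) (hγ1 : γ < 1) :
    Filter.Tendsto
      (fun ε : ℝ => (1 / (ε ^ ((β - n) * (γ - 1)) * (-Real.log ε) ^ δ)) *
        ∫ r in (0:ℝ)..(ε ^ (γ - 1)),
          r ^ (β + n - 1) / (1 + r ^ 2) ^ n * (Real.log (1 + r ^ 2)) ^ δ)
      (nhdsWithin 0 (Set.Ioi 0))
      (nhds ((2 * (1 - γ)) ^ δ / (β - n))) := by
  have hn' : (1:ℝ) ≤ n := by exact_mod_cast hn
  have hb : 0 < β - (n:ℝ) := by linarith
  have hγ1' : (0:ℝ) < 1 - γ := by linarith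
  set b : ℝ := β - (n:ℝ) with hbdef
  set f : ℝ → ℝ := fun r => r ^ (β + n - 1) / (1 + r^2) ^ n * (Real.log (1 + r^2)) ^ δ with hfdef
  set g : ℝ → ℝ := fun x => b * x ^ (b-1) * (Real.log (1 + x^2)) ^ δ
    + x ^ b * (2 * x / (1 + x^2) * (δ * (Real.log (1 + x^2)) ^ (δ-1))) with hgdef
  set G : ℝ → ℝ := fun y => y ^ b * (Real.log (1 + y^2)) ^ δ with hGdef
  have hf0 : ContinuousOn f (Ici 0) := cont_f n β δ (by push_cast; linarith) hδ
  have hf1 : ContinuousOn f (Ici 1) := hf0.mono (Ici_subset_Ici.mpr zero_le_one)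
  have hg1 : ContinuousOn g (Ici 1) := cont_g b δ
  have hgpos : ∀ x ∈ Ici (1:ℝ), 0 < g x := fun x hx => g_pos' b δ hb hδ x hx
  -- FTC
  have hGd : ∀ M : ℝ, 1 ≤ M → (∫ x in (1:ℝ)..M, g x) = G M - G 1 := by
    intro M hM
    apply intervalIntegral.integral_eq_sub_of_hasDerivAt
    · intro x hx
      rw [Set.uIcc_of_le hM] at hx
      exact hasDerivAt_G b δ x hx.1
    · exact integrable_of_cont 1 g hg1 1 M le_rfl hM
  have hGtop : Tendsto G atTop atTop := tendsto_mul_rpow b δ hb hδ _ tendsto_v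
  have hGdtop : Tendsto (fun M => ∫ x in (1:ℝ)..M, g x) atTop atTop := by
    have hsub : Tendsto (fun M => G M - G 1) atTop atTop := by
      apply Tendsto.congr _ (tendsto_atTop_add_const_right atTop (-(G 1)) hGtop)
      intro M; ring
    apply Tendsto.congr' _ hsub
    filter_upwards [eventually_ge_atTop (1:ℝ)] with M hM
    exact (hGd M hM).symm
  have hlimfg : Tendsto (fun x => f x / g x) atTop (nhds (1/b)) := tendsto_fg n β δ hb hδ
  have hces := cesaro_aux f g (1/b) hf1 hg1 hgpos hGdtop hlimfg
  -- add the piece from 0 to 1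
  have hF : Tendsto (fun M => (∫ x in (0:ℝ)..M, f x) / (∫ x in (1:ℝ)..M, g x)) atTop
      (nhds (1/b)) := by
    have h0 : Tendsto (fun M => (∫ x in (0:ℝ)..1, f x) / (∫ x in (1:ℝ)..M, g x)) atTop
        (nhds 0) := Tendsto.div_atTop tendsto_const_nhds hGdtop
    have hsum := h0.add hces
    rw [zero_add] at hsum
    apply hsum.congr'
    filter_upwards [eventually_ge_atTop (1:ℝ)] with M hM
    have i1 : IntervalIntegrable f volume 0 1 := integrable_of_cont 0 f hf0 0 1 le_rfl zero_le_one
    have i2 : IntervalIntegrable f volume 1 M :=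
      integrable_of_cont 0 f hf0 1 M zero_le_one (by linarith)
    rw [← intervalIntegral.integral_add_adjacent_intervals i1 i2, add_div]
  -- the comparison denominator
  set D : ℝ → ℝ := fun M => M ^ b * ((1-γ)⁻¹ * Real.log M) ^ δ with hDdef
  have hc : (0:ℝ) < (1-γ)⁻¹ := by positivity
  have hDtop : Tendsto D atTop atTop :=
    tendsto_mul_rpow b δ hb hδ _ (Real.tendsto_log_atTop.const_mul_atTop hc)
  have hGoverD : Tendsto (fun M => G M / D M) atTop (nhds ((2*(1-γ))^δ)) := by
    have hbase : Tendsto (fun M : ℝ => Real.log (1+M^2) / ((1-γ)⁻¹ * Real.log M)) atTop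
        (nhds (2*(1-γ))) := by
      have h1 := tendsto_log_ratio.div_const (1-γ)⁻¹
      have h2 : 2 / (1-γ)⁻¹ = 2 * (1-γ) := by field_simp
      rw [h2] at h1
      apply h1.congr
      intro M
      rw [div_div, mul_comm]
    have hcont : ContinuousAt (fun y : ℝ => y ^ δ) (2*(1-γ)) :=
      Real.continuousAt_rpow_const _ _ (Or.inl (by positivity))
    have h3 := (hcont.tendsto.comp hbase : Tendsto
      (fun M : ℝ => (Real.log (1+M^2) / ((1-γ)⁻¹ * Real.log M)) ^ δ) atTop (nhds ((2*(1-γ))^δ)))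
    apply h3.congr'
    filter_upwards [eventually_ge_atTop (2:ℝ)] with M hM
    have hM0 : (0:ℝ) < M := by linarith
    have hlogM : 0 < Real.log M := Real.log_pos (by linarith)
    have hA : (0:ℝ) ≤ Real.log (1+M^2) := (Real.log_pos (by nlinarith)).le
    have hMb : M ^ b ≠ 0 := ne_of_gt (Real.rpow_pos_of_pos hM0 b)
    simp only [Function.comp_apply, hGdef, hDdef]
    rw [Real.div_rpow hA (mul_nonneg hc.le hlogM.le), mul_div_mul_left _ _ hMb]
  have hGdoverD : Tendsto (fun M => (∫ x in (1:ℝ)..M, g x) / D M) atTop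
      (nhds ((2*(1-γ))^δ)) := by
    have h4 : Tendsto (fun M => G 1 / D M) atTop (nhds 0) :=
      Tendsto.div_atTop tendsto_const_nhds hDtop
    have h5 := hGoverD.sub h4
    rw [sub_zero] at h5
    apply h5.congr'
    filter_upwards [eventually_ge_atTop (1:ℝ)] with M hM
    rw [hGd M hM, sub_div]
  -- combine
  have hΨ : Tendsto (fun M => (1 / D M) * ∫ x in (0:ℝ)..M, f x) atTop
      (nhds ((2*(1-γ))^δ / b)) := by
    have hprod := hF.mul hGdoverD
    have hval : 1/b * (2*(1-γ))^δ = (2*(1-γ))^δ / b := by ring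
    rw [hval] at hprod
    apply hprod.congr'
    filter_upwards [hGdtop.eventually_gt_atTop 0, hDtop.eventually_gt_atTop 0] with M h1 h2
    field_simp
  -- composition with ε ↦ ε^(γ-1)
  have hm : Tendsto (fun ε : ℝ => ε ^ (γ-1)) (nhdsWithin 0 (Set.Ioi 0)) atTop := by
    have h1 : Tendsto (fun ε : ℝ => (ε⁻¹) ^ (1-γ)) (nhdsWithin 0 (Set.Ioi 0)) atTop :=
      (tendsto_rpow_atTop hγ1').comp tendsto_inv_nhdsGT_zero
    apply h1.congr'
    filter_upwards [self_mem_nhdsWithin] with ε hε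
    have hε0 : (0:ℝ) < ε := hε
    rw [Real.inv_rpow hε0.le, ← Real.rpow_neg hε0.le]
    norm_num
  have hcomp := hΨ.comp hm
  apply hcomp.congr'
  filter_upwards [self_mem_nhdsWithin] with ε hε
  have hε0 : (0:ℝ) < ε := hε
  have e1 : ε ^ (b * (γ-1)) = (ε ^ (γ-1)) ^ b := by
    rw [mul_comm, Real.rpow_mul hε0.le]
  have e2 : ((1-γ)⁻¹ * Real.log (ε ^ (γ-1))) = -Real.log ε := by
    rw [Real.log_rpow hε0]
    field_simp
    ring
  simp only [Function.comp_apply, hDdef]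
  rw [e1, e2]
end

section
/- Let $n \ge 3$, $1 \le m < n/2$, $2_m^* = 2n/(n-2m)$, $\alpha > 0$, and suppose Sobolev-type constants satisfy: for every $u$ in a class $\mathcal{A}$ with $\|\nabla^m u\|_{L^2(B)} = 1$ one has $\int_B |u|^{2_m^*}\,dx \le \Sigma$ (where $\Sigma > 0$), and suppose $(u_j) \subset \mathcal{A}$ satisfies $\|\nabla^m u_j\|_{L^2(B)} = 1$, the uniform pointwise bound $|u_j(x)| \le C|x|^{-(n-2m)/2}$, and $u_j \to 0$ a.e. in $B$. Then $\limsup_{j\to\infty} \int_B |u_j(x)|^{2_m^* + |x|^{\alpha_j}}\,dx \le \Sigma$ whenever $\alpha_j \ge 1$ and $\alpha_j \to +\infty$. -/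
open MeasureTheory Filter

set_option maxHeartbeats 1000000

theorem stmt_17 (n m : ℕ) (hn : 3 ≤ n) (hm : 1 ≤ m) (hmn : 2 * m < n)
    (Sig C : ℝ) (hSig : 0 < Sig) (hC : 0 < C)
    (u : ℕ → EuclideanSpace ℝ (Fin n) → ℝ)
    (hmeas : ∀ j, Measurable (u j))
    -- each u j satisfies the critical Sobolev bound coming from ‖∇^m u j‖ = 1
    (hSob : ∀ j, ∫ x in Metric.ball (0 : EuclideanSpace ℝ (Fin n)) 1,
        |u j x| ^ (2 * (n : ℝ) / ((n : ℝ) - 2 * m)) ≤ Sig)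
    -- the uniform pointwise radial bound
    (hbound : ∀ j, ∀ x ∈ Metric.ball (0 : EuclideanSpace ℝ (Fin n)) 1, x ≠ 0 →
        |u j x| ≤ C * ‖x‖ ^ (-((n : ℝ) - 2 * m) / 2))
    -- a.e. convergence to 0
    (hae : ∀ᵐ x ∂(volume.restrict (Metric.ball (0 : EuclideanSpace ℝ (Fin n)) 1)),
        Filter.Tendsto (fun j => u j x) Filter.atTop (nhds 0))
    (α : ℕ → ℝ) (hα : ∀ j, 1 ≤ α j) (hαtop : Filter.Tendsto α Filter.atTop Filter.atTop) :
    Filter.limsup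
        (fun j => ∫ x in Metric.ball (0 : EuclideanSpace ℝ (Fin n)) 1,
          |u j x| ^ (2 * (n : ℝ) / ((n : ℝ) - 2 * m) + ‖x‖ ^ α j))
        Filter.atTop ≤ Sig := by
  classical
  have hnontriv : Nontrivial (EuclideanSpace ℝ (Fin n)) := by
    have : Nonempty (Fin n) := ⟨⟨0, by omega⟩⟩
    infer_instance
  set B : Set (EuclideanSpace ℝ (Fin n)) := Metric.ball (0 : EuclideanSpace ℝ (Fin n)) 1 with hB
  have hnm : (0:ℝ) < (n:ℝ) - 2 * m := by
    have : (2 * m : ℝ) < n := by exact_mod_cast hmn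
    linarith
  set p : ℝ := 2 * (n : ℝ) / ((n : ℝ) - 2 * m) with hpdef
  have hp0 : 0 < p := by
    apply div_pos _ hnm
    have : (0:ℝ) < n := by positivity
    linarith
  set k : ℝ := ((n:ℝ) - 2 * m) / 2 with hkdef
  have hk0 : 0 < k := by positivity
  have hkeq : -((n : ℝ) - 2 * m) / 2 = -k := by rw [hkdef]; ring
  set f : ℕ → EuclideanSpace ℝ (Fin n) → ℝ := fun j x => |u j x| ^ (p + ‖x‖ ^ α j) with hf
  have hf0 : ∀ j x, 0 ≤ f j x := fun j x => Real.rpow_nonneg (abs_nonneg _) _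
  have hexp0 : ∀ (j) (x : EuclideanSpace ℝ (Fin n)), (0:ℝ) ≤ ‖x‖ ^ α j := fun j x =>
    Real.rpow_nonneg (norm_nonneg _) _
  have hfmeas : ∀ j, Measurable (f j) := by
    intro j
    have h1 : Measurable fun x : EuclideanSpace ℝ (Fin n) => |u j x| := (hmeas j).abs
    have h2 : Measurable fun x : EuclideanSpace ℝ (Fin n) => p + ‖x‖ ^ α j :=
      measurable_const.add (measurable_norm.pow measurable_const)
    exact h1.pow h2
  -- the integrals are nonneg
  have hL0 : ∀ j, 0 ≤ ∫ x in B, f j x := fun j =>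
    integral_nonneg fun x => hf0 j x
  refine le_of_forall_pos_le_add ?_
  intro ε hε
  set δ : ℝ := ε / (2 * Sig) with hδdef
  have hδ0 : 0 < δ := by positivity
  -- choose the small radius s
  have htend : Tendsto (fun r : ℝ => (C * r ^ (-k)) ^ r) (nhdsWithin 0 (Set.Ioi 0)) (nhds 1) := by
    have hb : Tendsto (fun r : ℝ => Real.log r * r) (nhdsWithin 0 (Set.Ioi 0)) (nhds 0) := by
      have := tendsto_log_mul_rpow_nhdsGT_zero (r := 1) zero_lt_one
      refine this.congr fun r => by rw [Real.rpow_one]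
    have ha : Tendsto (fun r : ℝ => Real.log C * r) (nhdsWithin 0 (Set.Ioi 0)) (nhds 0) := by
      have : Tendsto (fun r : ℝ => Real.log C * r) (nhds 0) (nhds (Real.log C * 0)) :=
        (continuous_const.mul continuous_id).tendsto 0
      rw [mul_zero] at this
      exact this.mono_left nhdsWithin_le_nhds
    have hphi : Tendsto (fun r : ℝ => Real.log C * r + (-k) * (Real.log r * r))
        (nhdsWithin 0 (Set.Ioi 0)) (nhds 0) := by
      have := ha.add (hb.const_mul (-k))
      simpa using this
    have := (Real.continuous_exp.tendsto 0).comp hphi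
    rw [Real.exp_zero] at this
    refine this.congr' ?_
    filter_upwards [self_mem_nhdsWithin] with r hr
    have hr0 : (0:ℝ) < r := hr
    have hbase : (0:ℝ) < C * r ^ (-k) := by positivity
    rw [Function.comp_apply, Real.rpow_def_of_pos hbase,
      Real.log_mul hC.ne' (by positivity), Real.log_rpow hr0]
    ring_nf
  have hev : ∀ᶠ r in nhdsWithin (0:ℝ) (Set.Ioi 0), (C * r ^ (-k)) ^ r < 1 + δ :=
    htend.eventually_lt_const (by linarith)
  obtain ⟨s', hs'pos, hs'sub⟩ := mem_nhdsGT_iff_exists_Ioc_subset.1 hev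
  set s : ℝ := min s' (1/2) with hsdef
  have hs0 : 0 < s := lt_min hs'pos (by norm_num)
  have hs1 : s < 1 := lt_of_le_of_lt (min_le_right _ _) (by norm_num)
  have hsmall : ∀ r : ℝ, 0 < r → r ≤ s → (C * r ^ (-k)) ^ r < 1 + δ := by
    intro r hr hrs
    exact hs'sub ⟨hr, hrs.trans (min_le_left _ _)⟩
  set Sin : Set (EuclideanSpace ℝ (Fin n)) := Metric.ball (0 : EuclideanSpace ℝ (Fin n)) s with hSin
  set Sout : Set (EuclideanSpace ℝ (Fin n)) := B \ Sin with hSout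
  have hSinB : Sin ⊆ B := Metric.ball_subset_ball hs1.le
  have hSoutB : Sout ⊆ B := Set.diff_subset
  have hSinmeas : MeasurableSet Sin := measurableSet_ball
  have hSoutmeas : MeasurableSet Sout := measurableSet_ball.diff measurableSet_ball
  have hunion : Sin ∪ Sout = B := Set.union_diff_cancel hSinB
  -- constants on the annulus
  set M : ℝ := C * s ^ (-k) with hM
  have hM0 : 0 < M := by positivity
  set M' : ℝ := max M 1 with hM'
  have hM'1 : (1:ℝ) ≤ M' := le_max_right _ _
  set D : ℝ := M' ^ (p + 1) with hD
  -- membership facts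
  have hmemout : ∀ x ∈ Sout, s ≤ ‖x‖ ∧ ‖x‖ < 1 ∧ x ≠ 0 := by
    intro x hx
    obtain ⟨hx1, hx2⟩ := hx
    rw [hB, Metric.mem_ball, dist_zero_right] at hx1
    rw [hSin, Metric.mem_ball, dist_zero_right, not_lt] at hx2
    refine ⟨hx2, hx1, ?_⟩
    intro h
    rw [h, norm_zero] at hx2
    exact absurd hx2 (not_le.2 hs0)
  -- bound on the annulus: |u j x| ≤ M'
  have huM : ∀ j, ∀ x ∈ Sout, |u j x| ≤ M' := by
    intro j x hx
    obtain ⟨hsx, hx1, hx0⟩ := hmemout x hx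
    have h1 : |u j x| ≤ C * ‖x‖ ^ (-k) := by
      have := hbound j x (hSoutB hx) hx0
      rwa [hkeq] at this
    have h2 : ‖x‖ ^ (-k) ≤ s ^ (-k) :=
      Real.rpow_le_rpow_of_nonpos hs0 hsx (neg_nonpos.2 hk0.le)
    calc |u j x| ≤ C * ‖x‖ ^ (-k) := h1
      _ ≤ C * s ^ (-k) := by nlinarith
      _ ≤ M' := le_max_left _ _
  -- exponent bound inside the ball
  have hexple : ∀ (j) (x : EuclideanSpace ℝ (Fin n)), x ∈ B → p + ‖x‖ ^ α j ≤ p + 1 := by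
    intro j x hx
    rw [hB, Metric.mem_ball, dist_zero_right] at hx
    have : ‖x‖ ^ α j ≤ 1 :=
      Real.rpow_le_one (norm_nonneg _) hx.le (le_trans zero_le_one (hα j))
    linarith
  -- annulus uniform bound
  have hfD : ∀ j, ∀ x ∈ Sout, f j x ≤ D := by
    intro j x hx
    have h1 : f j x ≤ M' ^ (p + ‖x‖ ^ α j) :=
      Real.rpow_le_rpow (abs_nonneg _) (huM j x hx) (by linarith [hexp0 j x, hp0])
    have h2 : M' ^ (p + ‖x‖ ^ α j) ≤ M' ^ (p + 1) :=
      Real.rpow_le_rpow_of_exponent_le hM'1 (hexple j x (hSoutB hx))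
    exact h1.trans h2
  -- small-ball pointwise bound
  have hfsmall : ∀ j, ∀ x : EuclideanSpace ℝ (Fin n), x ≠ 0 → x ∈ Sin → f j x ≤ (1 + δ) * |u j x| ^ p := by
    intro j x hx0 hx
    rw [hSin, Metric.mem_ball, dist_zero_right] at hx
    have hr0 : 0 < ‖x‖ := norm_pos_iff.2 hx0
    by_cases hu0 : u j x = 0
    · rw [hf]
      simp only [hu0, abs_zero]
      rw [Real.zero_rpow (by positivity), Real.zero_rpow hp0.ne']
      simp
    · have hu0' : 0 < |u j x| := abs_pos.2 hu0
      have hsplit : f j x = |u j x| ^ p * |u j x| ^ (‖x‖ ^ α j) := by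
        rw [hf]; exact Real.rpow_add hu0' _ _
      have hfac : |u j x| ^ (‖x‖ ^ α j) ≤ 1 + δ := by
        by_cases hle : |u j x| ≤ 1
        · have := Real.rpow_le_one (abs_nonneg _) hle (hexp0 j x)
          linarith
        · push_neg at hle
          have hxB : x ∈ B := by
            rw [hB, Metric.mem_ball, dist_zero_right]; linarith
          have hub : |u j x| ≤ C * ‖x‖ ^ (-k) := by
            have := hbound j x hxB hx0
            rwa [hkeq] at this
          have h1 : |u j x| ^ (‖x‖ ^ α j) ≤ (C * ‖x‖ ^ (-k)) ^ (‖x‖ ^ α j) :=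
            Real.rpow_le_rpow (abs_nonneg _) hub (hexp0 j x)
          have hbase1 : (1:ℝ) ≤ C * ‖x‖ ^ (-k) := le_trans hle.le hub
          have hexpr : ‖x‖ ^ α j ≤ ‖x‖ := by
            have := Real.rpow_le_rpow_of_exponent_ge hr0 (by linarith : ‖x‖ ≤ 1) (hα j)
            rwa [Real.rpow_one] at this
          have h2 : (C * ‖x‖ ^ (-k)) ^ (‖x‖ ^ α j) ≤ (C * ‖x‖ ^ (-k)) ^ ‖x‖ :=
            Real.rpow_le_rpow_of_exponent_le hbase1 hexpr
          have h3 : (C * ‖x‖ ^ (-k)) ^ ‖x‖ < 1 + δ := hsmall ‖x‖ hr0 hx.le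
          linarith
      calc f j x = |u j x| ^ p * |u j x| ^ (‖x‖ ^ α j) := hsplit
        _ ≤ |u j x| ^ p * (1 + δ) := by
            have := Real.rpow_nonneg (abs_nonneg (u j x)) p
            nlinarith
        _ = (1 + δ) * |u j x| ^ p := by ring
  -- the annulus integrals tend to 0
  set A : ℕ → ℝ := fun j => ∫ x in Sout, f j x with hA
  have hA0 : ∀ j, 0 ≤ A j := fun j => integral_nonneg fun x => hf0 j x
  have hAtend : Tendsto A atTop (nhds 0) := by
    have := MeasureTheory.tendsto_integral_of_dominated_convergence
      (μ := volume.restrict Sout) (F := fun j x => f j x) (f := fun _ => (0:ℝ))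
      (bound := fun _ => D)
      (fun j => (hfmeas j).aestronglyMeasurable)
      (by
        refine (integrableOn_const_iff (C := D)).2 (Or.inr ?_)
        exact lt_of_le_of_lt (measure_mono hSoutB) measure_ball_lt_top)
      (by
        intro j
        rw [ae_restrict_iff' hSoutmeas]
        filter_upwards with x hx
        rw [Real.norm_eq_abs, abs_of_nonneg (hf0 j x)]
        exact hfD j x hx)
      (by
        have h1 : ∀ᵐ x ∂volume.restrict Sout,
            Tendsto (fun j => u j x) atTop (nhds 0) :=
          ae_restrict_of_ae_restrict_of_subset hSoutB hae
        filter_upwards [h1] with x hx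
        have habs : Tendsto (fun j => |u j x|) atTop (nhds 0) := by
          have := hx.abs; simpa using this
        have hple : ∀ᶠ j in atTop, f j x ≤ |u j x| ^ p := by
          filter_upwards [habs.eventually_le_const zero_lt_one] with j hj
          exact Real.rpow_le_rpow_of_exponent_ge' (abs_nonneg _) hj hp0.le
            (by linarith [hexp0 j x])
        have hppow : Tendsto (fun j => |u j x| ^ p) atTop (nhds 0) := by
          have hcont : ContinuousAt (fun a : ℝ => a ^ p) 0 :=
            Real.continuousAt_rpow_const 0 p (Or.inr hp0.le)
          have := hcont.tendsto.comp habs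
          rwa [Real.zero_rpow hp0.ne'] at this
        exact squeeze_zero' (Eventually.of_forall fun j => hf0 j x) hple hppow)
    simpa using this
  -- main per-j estimate
  have hkey : ∀ j, (∫ x in B, f j x) ≤ (1 + δ) * Sig + A j := by
    intro j
    by_cases hint : IntegrableOn (f j) B volume
    · have hintIn : IntegrableOn (f j) Sin volume := hint.mono_set hSinB
      have hintOut : IntegrableOn (f j) Sout volume := hint.mono_set hSoutB
      -- |u j|^p is integrable on Sin
      have hupmeas : Measurable fun x : EuclideanSpace ℝ (Fin n) => |u j x| ^ p :=
        (hmeas j).abs.pow measurable_const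
      have hupIn : IntegrableOn (fun x => |u j x| ^ p) Sin volume := by
        have hconst1 : IntegrableOn (fun _ => (1:ℝ)) Sin volume :=
          (integrableOn_const_iff (C := (1:ℝ))).2 (Or.inr
            (lt_of_le_of_lt (measure_mono hSinB) measure_ball_lt_top))
        refine Integrable.mono' (hintIn.add hconst1)
          hupmeas.aestronglyMeasurable ?_
        filter_upwards with x
        rw [Real.norm_eq_abs, abs_of_nonneg (Real.rpow_nonneg (abs_nonneg _) _)]
        by_cases hle : |u j x| ≤ 1
        · have : |u j x| ^ p ≤ 1 := Real.rpow_le_one (abs_nonneg _) hle hp0.le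
          simp only [Pi.add_apply]
          linarith [hf0 j x]
        · push_neg at hle
          have : |u j x| ^ p ≤ f j x := by
            rw [hf]
            exact Real.rpow_le_rpow_of_exponent_le hle.le (by linarith [hexp0 j x])
          simp only [Pi.add_apply]
          linarith
      have hupOut : IntegrableOn (fun x => |u j x| ^ p) Sout volume := by
        refine Integrable.mono' ((integrableOn_const_iff (C := M' ^ p)).2 (Or.inr
          (lt_of_le_of_lt (measure_mono hSoutB) measure_ball_lt_top)))
          hupmeas.aestronglyMeasurable ?_
        rw [ae_restrict_iff' hSoutmeas]
        filter_upwards with x hx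
        rw [Real.norm_eq_abs, abs_of_nonneg (Real.rpow_nonneg (abs_nonneg _) _)]
        exact Real.rpow_le_rpow (abs_nonneg _) (huM j x hx) hp0.le
      have hupB : IntegrableOn (fun x => |u j x| ^ p) B volume := by
        rw [← hunion]
        exact hupIn.union hupOut
      -- split the integral
      have hsplit : (∫ x in B, f j x) = (∫ x in Sin, f j x) + ∫ x in Sout, f j x := by
        rw [← hunion,
          setIntegral_union (disjoint_sdiff_self_right) hSoutmeas hintIn hintOut]
      -- small ball estimate
      have hIn : (∫ x in Sin, f j x) ≤ (1 + δ) * ∫ x in Sin, |u j x| ^ p := by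
        rw [← integral_const_mul]
        refine integral_mono_ae hintIn (hupIn.const_mul _) ?_
        have hzero : ∀ᵐ x ∂volume.restrict Sin, x ≠ (0:EuclideanSpace ℝ (Fin n)) := by
          refine ae_restrict_of_ae ?_
          have : volume ({(0:EuclideanSpace ℝ (Fin n))} : Set (EuclideanSpace ℝ (Fin n))) = 0 := measure_singleton _
          rw [ae_iff]
          convert this using 2
          ext x; simp
        rw [EventuallyLE]
        rw [ae_restrict_iff' hSinmeas] at hzero ⊢
        filter_upwards [hzero] with x hx0 hx
        exact hfsmall j x (hx0 hx) hx
      have hIn2 : (∫ x in Sin, |u j x| ^ p) ≤ ∫ x in B, |u j x| ^ p := by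
        refine setIntegral_mono_set hupB ?_ (HasSubset.Subset.eventuallyLE hSinB)
        filter_upwards with x
        exact Real.rpow_nonneg (abs_nonneg _) _
      have hSobj := hSob j
      have h1δ : (0:ℝ) < 1 + δ := by linarith
      calc (∫ x in B, f j x) = (∫ x in Sin, f j x) + ∫ x in Sout, f j x := hsplit
        _ ≤ (1 + δ) * (∫ x in Sin, |u j x| ^ p) + A j := by rw [hA]; linarith
        _ ≤ (1 + δ) * Sig + A j := by nlinarith [hIn2.trans hSobj]
    · rw [integral_undef hint]
      have : (0:ℝ) ≤ (1 + δ) * Sig := by positivity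
      linarith [hA0 j]
  -- conclude
  have hδSig : (1 + δ) * Sig = Sig + ε / 2 := by
    rw [hδdef]; field_simp
  have hevA : ∀ᶠ j in atTop, A j ≤ ε / 2 := by
    have := hAtend.eventually_le_const (show (0:ℝ) < ε / 2 by linarith)
    filter_upwards [this] with j hj using hj
  have hevL : ∀ᶠ j in atTop, (∫ x in B, f j x) ≤ Sig + ε := by
    filter_upwards [hevA] with j hj
    have := hkey j
    rw [hδSig] at this
    linarith
  exact limsup_le_of_le (isCoboundedUnder_le_of_le atTop hL0) hevL
end
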